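/- arXiv:2601.17619 — 5 statements merged into one kernel-verified Lean document; each statement's English description precedes it below -/
import Mathlib

section
/- There is a bijection between the tubes of G with at least one edge and the induced tubes of the line graph L(G), given by T ↦ L(T); moreover, under this bijection, two tubes S, T of G overlap if and only if the induced tubes L(S), L(T) of L(G) are incompatible. -/
open SimpleGraph

namespace Cosmo

variable {V : Type*}

/-- A tube of `G` is a connected subgraph. -/
def IsTube (G : SimpleGraph V) (T : G.Subgraph) : Prop := T.Connected

/-- Tubes are nested if one contains the other. -/
def Nested {G : SimpleGraph V} (S T : G.Subgraph) : Prop := S ≤ T ∨ T ≤ S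

/-- Tubes overlap if their (vertex) intersection is nonempty and they are not nested. -/
def Overlapping {G : SimpleGraph V} (S T : G.Subgraph) : Prop :=
  (S.verts ∩ T.verts).Nonempty ∧ ¬ Nested S T

/-- Tubes are incompatible if there is an edge of `G` between them and they are not nested. -/
def Incompatible {G : SimpleGraph V} (S T : G.Subgraph) : Prop :=
  (∃ u w, G.Adj u w ∧ u ∈ S.verts ∧ w ∈ T.verts) ∧ ¬ Nested S T

/-- Tubes are compatible if they are not incompatible. -/
def Compatible {G : SimpleGraph V} (S T : G.Subgraph) : Prop := ¬ Incompatible S T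

/-- A complete tubing: a maximal collection of pairwise non-overlapping tubes. -/
def IsCompleteTubing (G : SimpleGraph V) (𝒯 : Set G.Subgraph) : Prop :=
  Maximal (fun 𝒞 : Set G.Subgraph =>
    (∀ T ∈ 𝒞, IsTube G T) ∧ 𝒞.Pairwise fun S T => ¬ Overlapping S T) 𝒯

/-- An admissible tubing: a maximal collection of pairwise compatible induced tubes. -/
def IsAdmissibleTubing (G : SimpleGraph V) (𝒯 : Set G.Subgraph) : Prop :=
  Maximal (fun 𝒞 : Set G.Subgraph =>
    (∀ T ∈ 𝒞, IsTube G T ∧ T.IsInduced) ∧ 𝒞.Pairwise Compatible) 𝒯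

/-- A labeling of an admissible tubing by the vertices, as in the bijection lemma:
`g v` is the tube associated to `v`, i.e. `v ∈ g v` and `v` avoids all strictly
smaller tubes of the tubing. -/
def IsVertexLabeling (G : SimpleGraph V) (𝒯 : Set G.Subgraph) (g : V → G.Subgraph) : Prop :=
  Set.BijOn g Set.univ 𝒯 ∧ ∀ v, v ∈ (g v).verts ∧ ∀ S ∈ 𝒯, S < g v → v ∉ S.verts


/-- The induced subgraph of the line graph `L(G)` on the edges of a subgraph `T` of `G`,
i.e. the natural copy of `L(T)` inside `L(G)`. -/
def lineSubgraph {V : Type*} (G : SimpleGraph V) (T : G.Subgraph) : (G.lineGraph).Subgraph where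
  verts := {e | (e : Sym2 V) ∈ T.edgeSet}
  Adj e f := (e : Sym2 V) ∈ T.edgeSet ∧ (f : Sym2 V) ∈ T.edgeSet ∧ (G.lineGraph).Adj e f
  adj_sub h := h.2.2
  edge_vert h := h.1
  symm := ⟨fun e f h => ⟨h.2.1, h.1, h.2.2.symm⟩⟩

/-! A tube with an edge has no isolated vertex, so it is determined by its edge set, which is the
vertex set of `L(T)`; the inverse map sends an induced tube of `L(G)` to the subgraph of `G`
spanned by its vertices. Walks in `T` and in `L(T)` translate into each other along the incidence
relation between vertices and edges, so connectivity passes both ways. Two tubes with edges share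
a vertex iff some edge of one equals or meets an edge of the other; if the two edges at the shared
vertex coincide, `L(S)` is connected and not contained in `L(T)`, so the common edge has a
neighbour in `L(S)`. -/

theorem _root_.SimpleGraph.Preconnected.of_rel {α β : Type*} {H : SimpleGraph α}
    {K : SimpleGraph β} (hH : H.Preconnected) (R : α → β → Prop) (hR : ∀ b, ∃ a, R a b)
    (hadj : ∀ a a', H.Adj a a' → ∃ b, R a b ∧ R a' b)
    (hfib : ∀ a b b', R a b → R a b' → K.Reachable b b') : K.Preconnected := by
  intro b b'
  obtain ⟨a, hab⟩ := hR b
  obtain ⟨a', hab'⟩ := hR b'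
  obtain ⟨p⟩ := hH a a'
  induction p generalizing b with
  | nil => exact hfib _ _ _ hab hab'
  | cons h _ ih =>
    obtain ⟨c, hac, hc⟩ := hadj _ _ h
    exact (hfib _ _ _ hab hac).trans (ih c hc hab')

section

variable {G : SimpleGraph V}

lemma _root_.SimpleGraph.Subgraph.Connected.exists_adj_of_not_subset {H K : G.Subgraph}
    (hH : H.Connected) {x : V} (hxH : x ∈ H.verts) (hxK : x ∈ K.verts)
    (hHK : ¬ H.verts ⊆ K.verts) : ∃ u w, G.Adj u w ∧ u ∈ H.verts ∧ w ∈ K.verts := by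
  obtain ⟨y, hyH, hyK⟩ := Set.not_subset.1 hHK
  have : Nontrivial H.verts :=
    Set.nontrivial_coe_sort.2 ⟨x, hxH, y, hyH, fun h => hyK (h ▸ hxK)⟩
  obtain ⟨z, hz⟩ := hH.preconnected.exists_adj_of_nontrivial ⟨x, hxH⟩
  exact ⟨z, x, (H.adj_sub hz).symm, hz.snd_mem, hxK⟩

lemma exists_adj_of_connected {T : G.Subgraph} (hT : T.Connected) (hE : T.edgeSet.Nonempty)
    {v : V} (hv : v ∈ T.verts) : ∃ w, T.Adj v w := by
  obtain ⟨e, he⟩ := hE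
  induction e using Sym2.ind with
  | _ a b =>
    have hab : T.Adj a b := he
    have : Nontrivial T.verts := ⟨⟨⟨a, hab.fst_mem⟩, ⟨b, hab.snd_mem⟩,
      fun h => hab.ne (congrArg Subtype.val h)⟩⟩
    exact hT.preconnected.exists_adj_of_nontrivial ⟨v, hv⟩

lemma le_of_edgeSet_subset {S T : G.Subgraph} (hS : ∀ v ∈ S.verts, ∃ w, S.Adj v w)
    (h : S.edgeSet ⊆ T.edgeSet) : S ≤ T := by
  refine ⟨fun v hv => ?_, fun v w hvw => h (Subgraph.mem_edgeSet.2 hvw)⟩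
  obtain ⟨w, hw⟩ := hS v hv
  exact (h (Subgraph.mem_edgeSet.2 hw) : T.Adj v w).fst_mem

lemma lineSubgraph_le_lineSubgraph_iff {S T : G.Subgraph} :
    lineSubgraph G S ≤ lineSubgraph G T ↔ S.edgeSet ⊆ T.edgeSet := by
  refine ⟨fun h e he => h.1 (show ⟨e, S.edgeSet_subset he⟩ ∈ (lineSubgraph G S).verts from he),
    fun h => ⟨fun _ he => h he, fun _ _ hef => ⟨h hef.1, h hef.2.1, hef.2.2⟩⟩⟩

lemma lineSubgraph_le_lineSubgraph_iff_of_connected {S T : G.Subgraph} (hS : S.Connected)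
    (hSE : S.edgeSet.Nonempty) : lineSubgraph G S ≤ lineSubgraph G T ↔ S ≤ T :=
  lineSubgraph_le_lineSubgraph_iff.trans
    ⟨le_of_edgeSet_subset fun _ => exists_adj_of_connected hS hSE, Subgraph.edgeSet_mono⟩

lemma nested_lineSubgraph_iff {S T : G.Subgraph} (hS : S.Connected) (hSE : S.edgeSet.Nonempty)
    (hT : T.Connected) (hTE : T.edgeSet.Nonempty) :
    Nested (lineSubgraph G S) (lineSubgraph G T) ↔ Nested S T := by
  rw [Nested, Nested, lineSubgraph_le_lineSubgraph_iff_of_connected hS hSE,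
    lineSubgraph_le_lineSubgraph_iff_of_connected hT hTE]

lemma lineSubgraph_isInduced (T : G.Subgraph) : (lineSubgraph G T).IsInduced :=
  fun _ hu _ hv hadj => ⟨hu, hv, hadj⟩

lemma connected_lineSubgraph {T : G.Subgraph} (hT : T.Connected) (hE : T.edgeSet.Nonempty) :
    (lineSubgraph G T).Connected := by
  obtain ⟨e, he⟩ := hE
  refine Subgraph.connected_iff.2 ⟨⟨?_⟩, ⟨⟨e, T.edgeSet_subset he⟩, he⟩⟩
  refine hT.preconnected.coe.of_rel (fun x e => (x : V) ∈ ((e : G.edgeSet) : Sym2 V)) ?_ ?_ ?_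
  · rintro ⟨e, he⟩
    exact ⟨⟨_, Subgraph.mem_verts_of_mem_edge he (Sym2.out_fst_mem _)⟩, Sym2.out_fst_mem _⟩
  · rintro x y (hxy : T.Adj x y)
    exact ⟨⟨⟨s(x, y), T.edgeSet_subset hxy⟩, hxy⟩, Sym2.mem_mk_left _ _, Sym2.mem_mk_right _ _⟩
  · rintro x ⟨e, he⟩ ⟨f, hf⟩ hxe hxf
    by_cases hef : e = f
    · subst hef; rfl
    · exact Adj.reachable ⟨he, hf, lineGraph_adj_iff_exists.2 ⟨hef, x, hxe, hxf⟩⟩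

def edgeSpan (E : Set G.edgeSet) : G.Subgraph where
  verts := {v | ∃ e ∈ E, v ∈ (e : Sym2 V)}
  Adj u w := ∃ e ∈ E, (e : Sym2 V) = s(u, w)
  adj_sub := by rintro u w ⟨e, -, he⟩; exact G.mem_edgeSet.1 (he ▸ e.2)
  edge_vert := by rintro u w ⟨e, he, h⟩; exact ⟨e, he, h ▸ Sym2.mem_mk_left u w⟩
  symm := ⟨fun _ _ ⟨e, he, h⟩ => ⟨e, he, h.trans Sym2.eq_swap⟩⟩

lemma edgeSpan_adj {E : Set G.edgeSet} {u w : V} :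
    (edgeSpan E).Adj u w ↔ ∃ e ∈ E, (e : Sym2 V) = s(u, w) := Iff.rfl

lemma mem_edgeSpan_verts {E : Set G.edgeSet} {v : V} :
    v ∈ (edgeSpan E).verts ↔ ∃ e ∈ E, v ∈ (e : Sym2 V) := Iff.rfl

lemma edgeSet_edgeSpan (E : Set G.edgeSet) : (edgeSpan E).edgeSet = Subtype.val '' E := by
  ext z
  induction z using Sym2.ind with
  | _ u w => exact edgeSpan_adj

lemma mem_edgeSet_edgeSpan {E : Set G.edgeSet} {e : G.edgeSet} :
    (e : Sym2 V) ∈ (edgeSpan E).edgeSet ↔ e ∈ E := by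
  rw [edgeSet_edgeSpan]
  exact Subtype.val_injective.mem_set_image

lemma lineSubgraph_edgeSpan {T' : G.lineGraph.Subgraph} (hT' : T'.IsInduced) :
    lineSubgraph G (edgeSpan T'.verts) = T' := by
  have hverts : (lineSubgraph G (edgeSpan T'.verts)).verts = T'.verts :=
    Set.ext fun _ => mem_edgeSet_edgeSpan
  refine Subgraph.ext hverts (funext₂ fun e f => propext ⟨fun h => ?_, fun h => ?_⟩)
  · exact hT' (hverts ▸ h.fst_mem) (hverts ▸ h.snd_mem) (Subgraph.adj_sub _ h)
  · exact ⟨mem_edgeSet_edgeSpan.2 h.fst_mem, mem_edgeSet_edgeSpan.2 h.snd_mem, T'.adj_sub h⟩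

lemma connected_edgeSpan {T' : G.lineGraph.Subgraph} (hT' : T'.Connected) :
    (edgeSpan T'.verts).Connected := by
  obtain ⟨e, he⟩ := hT'.nonempty
  refine Subgraph.connected_iff.2 ⟨⟨?_⟩, ⟨_, mem_edgeSpan_verts.2 ⟨e, he, Sym2.out_fst_mem _⟩⟩⟩
  refine hT'.preconnected.coe.of_rel (fun e x => (x : V) ∈ ((e : G.edgeSet) : Sym2 V)) ?_ ?_ ?_
  · rintro ⟨x, hx⟩
    obtain ⟨e, he, hxe⟩ := mem_edgeSpan_verts.1 hx
    exact ⟨⟨e, he⟩, hxe⟩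
  · rintro e f hef
    obtain ⟨-, x, hxe, hxf⟩ := lineGraph_adj_iff_exists.1 (T'.adj_sub hef)
    exact ⟨⟨x, mem_edgeSpan_verts.2 ⟨f, f.2, hxf⟩⟩, hxe, hxf⟩
  · rintro ⟨e, he⟩ ⟨x, hx⟩ ⟨y, hy⟩ hxe hye
    by_cases hxy : x = y
    · subst hxy; rfl
    · exact Adj.reachable
        (edgeSpan_adj.2 ⟨e, he, (Sym2.mem_and_mem_iff hxy).1 ⟨hxe, hye⟩⟩ : (edgeSpan _).Adj x y)

lemma overlapping_iff_incompatible_lineSubgraph {S T : G.Subgraph} (hS : S.Connected)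
    (hSE : S.edgeSet.Nonempty) (hT : T.Connected) (hTE : T.edgeSet.Nonempty) :
    Overlapping S T ↔ Incompatible (lineSubgraph G S) (lineSubgraph G T) := by
  rw [Overlapping, Incompatible, nested_lineSubgraph_iff hS hSE hT hTE]
  refine and_congr_left fun hST => ⟨?_, ?_⟩
  · rintro ⟨v, hvS, hvT⟩
    obtain ⟨a, hva⟩ := exists_adj_of_connected hS hSE hvS
    obtain ⟨b, hvb⟩ := exists_adj_of_connected hT hTE hvT
    let e : G.edgeSet := ⟨s(v, a), S.edgeSet_subset hva⟩
    let f : G.edgeSet := ⟨s(v, b), T.edgeSet_subset hvb⟩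
    by_cases hef : e = f
    · have hSf : f ∈ (lineSubgraph G S).verts := hef ▸ hva
      refine (connected_lineSubgraph hS hSE).exists_adj_of_not_subset hSf hvb fun h => ?_
      exact hST (Or.inl ((lineSubgraph_le_lineSubgraph_iff_of_connected hS hSE).1
        ⟨h, fun _ _ hgh => ⟨h hgh.1, h hgh.2.1, hgh.2.2⟩⟩))
    · exact ⟨e, f, lineGraph_adj_iff_exists.2 ⟨hef, v, Sym2.mem_mk_left _ _,
        Sym2.mem_mk_left _ _⟩, hva, hvb⟩
  · rintro ⟨e, f, hef, he, hf⟩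
    obtain ⟨-, x, hxe, hxf⟩ := lineGraph_adj_iff_exists.1 hef
    exact ⟨x, Subgraph.mem_verts_of_mem_edge he hxe, Subgraph.mem_verts_of_mem_edge hf hxf⟩

end

theorem lineSubgraph_bijOn_general {V : Type*} (G : SimpleGraph V) :
    Set.BijOn (lineSubgraph G)
      {T : G.Subgraph | IsTube G T ∧ T.edgeSet.Nonempty}
      {T' : (G.lineGraph).Subgraph | IsTube G.lineGraph T' ∧ T'.IsInduced} ∧
    ∀ S T : G.Subgraph,
      (IsTube G S ∧ S.edgeSet.Nonempty) → (IsTube G T ∧ T.edgeSet.Nonempty) →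
      (Overlapping S T ↔ Incompatible (lineSubgraph G S) (lineSubgraph G T)) := by
  refine ⟨⟨fun T hT => ⟨connected_lineSubgraph hT.1 hT.2, lineSubgraph_isInduced T⟩,
    fun S hS T hT h => ?_, fun T' hT' => ?_⟩,
    fun S T hS hT => overlapping_iff_incompatible_lineSubgraph hS.1 hS.2 hT.1 hT.2⟩
  · exact le_antisymm ((lineSubgraph_le_lineSubgraph_iff_of_connected hS.1 hS.2).1 h.le)
      ((lineSubgraph_le_lineSubgraph_iff_of_connected hT.1 hT.2).1 h.ge)
  · obtain ⟨e, he⟩ := hT'.1.nonempty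
    exact ⟨edgeSpan T'.verts, ⟨connected_edgeSpan hT'.1, ⟨e, mem_edgeSet_edgeSpan.2 he⟩⟩,
      lineSubgraph_edgeSpan hT'.2⟩

/-- `T ↦ L(T)` is a bijection from tubes of `G` with at least one edge onto
induced tubes of `L(G)`, under which overlapping tubes correspond to incompatible tubes. -/
theorem lineSubgraph_bijOn {V : Type*} (G : SimpleGraph V) (hG : G.edgeSet.Nonempty) :
    Set.BijOn (lineSubgraph G)
      {T : G.Subgraph | IsTube G T ∧ T.edgeSet.Nonempty}
      {T' : (G.lineGraph).Subgraph | IsTube G.lineGraph T' ∧ T'.IsInduced} ∧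
    ∀ S T : G.Subgraph,
      (IsTube G S ∧ S.edgeSet.Nonempty) → (IsTube G T ∧ T.edgeSet.Nonempty) →
      (Overlapping S T ↔ Incompatible (lineSubgraph G S) (lineSubgraph G T)) :=
  lineSubgraph_bijOn_general G

end Cosmo
end

section
/- For any admissible tubing T of a graph G = (V,E) and any tube T ∈ T, there is a unique vertex v ∈ T lying outside every S ∈ T with S ⊊ T; moreover the map sending T to this vertex v is a bijection from T onto V. In particular every admissible tubing of G has exactly |V| tubes. -/
open SimpleGraph

namespace Cosmo

variable {V : Type*}

/-!
Two members of an admissible tubing that share a vertex or are joined by an edge are nested, and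
by maximality every induced tube compatible with all members is itself a member.

A tube `T` has a free vertex (one in no smaller member): otherwise take a maximal proper subtube
`S` of `T`; as `T` is connected, an edge of `T` leaves `S`, and the proper subtube containing its
outer endpoint would be nested with `S`, contradicting maximality. It has only one: if `v ≠ w`
were both free, the component of `w` in `T - v` would be a member, a proper subtube of `T`
containing `w`. Finally the smallest member containing a vertex `v` has `v` as its free vertex,
which inverts the map sending a tube to its free vertex.
-/

section Tubing

variable {G : SimpleGraph V}

theorem _root_.SimpleGraph.Subgraph.Connected.exists_adj_mem_not_mem {T : G.Subgraph}
    (hT : T.Connected) {B : Set V} {a b : V} (ha : a ∈ T.verts) (haB : a ∈ B)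
    (hb : b ∈ T.verts) (hbB : b ∉ B) : ∃ x y, T.Adj x y ∧ x ∈ B ∧ y ∉ B := by
  obtain ⟨p⟩ := hT.preconnected ⟨a, ha⟩ ⟨b, hb⟩
  obtain ⟨d, -, hd₁, hd₂⟩ := p.exists_boundary_dart (Subtype.val ⁻¹' B) haB hbB
  exact ⟨d.fst, d.snd, d.adj, hd₁, hd₂⟩

theorem _root_.SimpleGraph.Subgraph.le_induce_top_of_verts_subset {S : G.Subgraph} {s : Set V}
    (h : S.verts ⊆ s) : S ≤ (⊤ : G.Subgraph).induce s :=
  Subgraph.le_induce_top_verts.trans (Subgraph.induce_mono_right h)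

theorem _root_.SimpleGraph.Subgraph.isInduced_induce_top (s : Set V) :
    ((⊤ : G.Subgraph).induce s).IsInduced :=
  (Subgraph.isInduced_iff_exists_eq_induce_top _).2 ⟨s, rfl⟩

theorem _root_.SimpleGraph.Subgraph.IsInduced.le_of_verts_subset {S T : G.Subgraph}
    (hT : T.IsInduced) (hST : S.verts ⊆ T.verts) : S ≤ T :=
  hT.induce_top_verts ▸ Subgraph.le_induce_top_of_verts_subset hST

section ComponentIn

variable {A : Set V} {u w x y : V}

/-- The vertex set of the connected component of `w` in the induced subgraph `G[A]`. -/
def componentIn (G : SimpleGraph V) (A : Set V) (w : V) : Set V :=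
  ⋃₀ {s | w ∈ s ∧ s ⊆ A ∧ (G.induce s).Connected}

lemma _root_.SimpleGraph.induce_singleton_connected (v : V) : (G.induce {v}).Connected := by
  rw [connected_induce_iff, ← Subgraph.singletonSubgraph_eq_induce]
  exact Subgraph.singletonSubgraph_connected

lemma mem_componentIn_self (hw : w ∈ A) : w ∈ componentIn G A w :=
  ⟨{w}, ⟨rfl, Set.singleton_subset_iff.2 hw, induce_singleton_connected w⟩, rfl⟩

lemma componentIn_subset : componentIn G A w ⊆ A :=
  Set.sUnion_subset fun _ hs => hs.2.1

lemma connected_induce_componentIn (hw : w ∈ A) :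
    ((⊤ : G.Subgraph).induce (componentIn G A w)).Connected :=
  connected_induce_iff.1 <| induce_sUnion_connected_of_pairwise_not_disjoint
    ⟨{w}, rfl, Set.singleton_subset_iff.2 hw, induce_singleton_connected w⟩
    (fun hs ht => ⟨w, hs.1, ht.1⟩) (fun hs => hs.2.2)

lemma mem_componentIn_of_adj (hx : x ∈ componentIn G A w) (hy : y ∈ A) (hxy : G.Adj x y) :
    y ∈ componentIn G A w := by
  obtain ⟨s, ⟨hws, hsA, hs⟩, hxs⟩ := hx
  exact ⟨s ∪ {y}, ⟨Or.inl hws, Set.union_subset hsA (Set.singleton_subset_iff.2 hy),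
    connected_induce_union hs.preconnected (induce_singleton_connected y).preconnected hxs rfl hxy⟩,
    Or.inr rfl⟩

lemma verts_subset_componentIn {S : G.Subgraph} (hS : S.Connected) (hSA : S.verts ⊆ A)
    (hu : u ∈ S.verts) (huC : u ∈ componentIn G A w) : S.verts ⊆ componentIn G A w := by
  intro b hb
  by_contra hbC
  obtain ⟨x, y, hxy, hxC, hyC⟩ := hS.exists_adj_mem_not_mem hu huC hb hbC
  exact hyC (mem_componentIn_of_adj hxC (hSA (S.edge_vert hxy.symm)) hxy.adj_sub)

end ComponentIn

section Compatible

variable {S T U : G.Subgraph}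

lemma compatible_iff :
    Compatible S T ↔ ∀ u w, G.Adj u w → u ∈ S.verts → w ∈ T.verts → Nested S T := by
  simp only [Compatible, Incompatible, not_and, not_not, forall_exists_index, and_imp]

lemma Compatible.symm (h : Compatible S T) : Compatible T S :=
  compatible_iff.2 fun u w huw hu hw => (compatible_iff.1 h w u huw.symm hw hu).symm

lemma Nested.compatible (h : Nested S T) : Compatible S T :=
  compatible_iff.2 fun _ _ _ _ _ => h

lemma Compatible.of_le (h : Compatible S T) (hUT : U ≤ T) (hST : ¬ S ≤ T) : Compatible S U :=
  compatible_iff.2 fun u w huw hu hw =>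
    (compatible_iff.1 h u w huw hu (hUT.1 hw)).elim (absurd · hST) fun hTS => .inr (hUT.trans hTS)

lemma compatible_induce_componentIn {A : Set V} {w : V} (hS : S.Connected) (hSA : S.verts ⊆ A) :
    Compatible S ((⊤ : G.Subgraph).induce (componentIn G A w)) :=
  compatible_iff.2 fun _ _ hux hu hx => .inl <| Subgraph.le_induce_top_of_verts_subset <|
    verts_subset_componentIn hS hSA hu (mem_componentIn_of_adj hx (hSA hu) hux.symm)

end Compatible

def IsFreeVertex (𝒯 : Set G.Subgraph) (T : G.Subgraph) (v : V) : Prop :=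
  v ∈ T.verts ∧ ∀ S ∈ 𝒯, S < T → v ∉ S.verts

namespace IsAdmissibleTubing

variable {𝒯 : Set G.Subgraph} (h : IsAdmissibleTubing G 𝒯) {S T : G.Subgraph}
include h

lemma connected (hT : T ∈ 𝒯) : T.Connected := (h.1.1 T hT).1

lemma isInduced (hT : T ∈ 𝒯) : T.IsInduced := (h.1.1 T hT).2

lemma compatible (hS : S ∈ 𝒯) (hT : T ∈ 𝒯) : Compatible S T := by
  obtain rfl | hST := eq_or_ne S T
  · exact Nested.compatible (.inl le_rfl)
  · exact h.1.2 hS hT hST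

lemma mem_of_forall_compatible {U : G.Subgraph} (hU : U.Connected) (hU' : U.IsInduced)
    (hcomp : ∀ S ∈ 𝒯, Compatible S U) : U ∈ 𝒯 := by
  refine h.2 ⟨?_, ?_⟩ (Set.subset_insert U 𝒯) (Set.mem_insert U 𝒯)
  · rintro T (rfl | hT)
    exacts [⟨hU, hU'⟩, h.1.1 T hT]
  · exact h.1.2.insert fun S hS _ => ⟨(hcomp S hS).symm, hcomp S hS⟩

lemma nested_of_mem (hS : S ∈ 𝒯) (hT : T ∈ 𝒯) {u : V} (huS : u ∈ S.verts)
    (huT : u ∈ T.verts) : Nested S T := by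
  by_cases hTS : T.verts ⊆ S.verts
  · exact .inr ((h.isInduced hS).le_of_verts_subset hTS)
  obtain ⟨b, hbT, hbS⟩ := Set.not_subset.1 hTS
  obtain ⟨x, y, hxy, hxS, -⟩ := (h.connected hT).exists_adj_mem_not_mem huT huS hbT hbS
  exact compatible_iff.1 (h.compatible hS hT) x y hxy.adj_sub hxS (T.edge_vert hxy.symm)

lemma induce_componentIn_univ_mem (v : V) :
    (⊤ : G.Subgraph).induce (componentIn G Set.univ v) ∈ 𝒯 :=
  h.mem_of_forall_compatible (connected_induce_componentIn (Set.mem_univ v))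
    (Subgraph.isInduced_induce_top _)
    fun _ hS => compatible_induce_componentIn (h.connected hS) (Set.subset_univ _)

lemma exists_isFreeVertex [Finite V] (hT : T ∈ 𝒯) : ∃ v, IsFreeVertex 𝒯 T v := by
  by_contra! hc
  have hproper : ∀ v ∈ T.verts, ∃ S ∈ 𝒯, S < T ∧ v ∈ S.verts := by
    intro v hv
    simpa [IsFreeVertex, hv] using hc v
  obtain ⟨t, ht⟩ := (h.connected hT).nonempty
  obtain ⟨S₀, hS₀, hS₀T, -⟩ := hproper t ht
  obtain ⟨S, ⟨hS, hST⟩, hmax⟩ :=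
    Set.Finite.exists_maximalFor id {S | S ∈ 𝒯 ∧ S < T} (Set.toFinite _) ⟨S₀, hS₀, hS₀T⟩
  obtain ⟨s, hs⟩ := (h.connected hS).nonempty
  obtain ⟨b, hbT, hbS⟩ := Set.not_subset.1 fun hTS =>
    hST.not_ge ((h.isInduced hS).le_of_verts_subset hTS)
  obtain ⟨x, y, hxy, hxS, hyS⟩ := (h.connected hT).exists_adj_mem_not_mem (hST.le.1 hs) hs hbT hbS
  obtain ⟨S', hS', hS'T, hyS'⟩ := hproper y (T.edge_vert hxy.symm)
  rcases compatible_iff.1 (h.compatible hS hS') x y hxy.adj_sub hxS hyS' with hle | hle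
  · exact hyS (hmax ⟨hS', hS'T⟩ hle |>.1 hyS')
  · exact hyS (hle.1 hyS')

lemma isFreeVertex_unique (hT : T ∈ 𝒯) {v w : V} (hv : IsFreeVertex 𝒯 T v)
    (hw : IsFreeVertex 𝒯 T w) : v = w := by
  by_contra hvw
  set A := T.verts \ {v}
  have hwA : w ∈ A := ⟨hw.1, Ne.symm hvw⟩
  set C := (⊤ : G.Subgraph).induce (componentIn G A w)
  have hCT : C ≤ T := (h.isInduced hT).le_of_verts_subset fun x hx => (componentIn_subset hx).1
  have hC : C ∈ 𝒯 := by
    refine h.mem_of_forall_compatible (connected_induce_componentIn hwA)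
      (Subgraph.isInduced_induce_top _) fun S hS => ?_
    by_cases hST : S ≤ T
    · obtain rfl | hST := hST.eq_or_lt
      · exact Nested.compatible (.inr hCT)
      · have hvS : v ∉ S.verts := hv.2 S hS hST
        exact compatible_induce_componentIn (h.connected hS)
          fun x hx => ⟨hST.le.1 hx, fun hxv => hvS (hxv ▸ hx)⟩
    · exact (h.compatible hS hT).of_le hCT hST
  have hCT' : C < T := hCT.lt_of_ne fun hCeq =>
    (componentIn_subset (hCeq ▸ hv.1 : v ∈ C.verts)).2 rfl
  exact hw.2 C hC hCT' (mem_componentIn_self hwA)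

lemma exists_mem_isFreeVertex [Finite V] (v : V) : ∃ T ∈ 𝒯, IsFreeVertex 𝒯 T v := by
  obtain ⟨T, ⟨hT, hvT⟩, hmin⟩ := Set.Finite.exists_minimalFor id {S | S ∈ 𝒯 ∧ v ∈ S.verts}
    (Set.toFinite _) ⟨_, h.induce_componentIn_univ_mem v, mem_componentIn_self (Set.mem_univ v)⟩
  exact ⟨T, hT, hvT, fun S hS hST hvS => hST.not_ge (hmin ⟨hS, hvS⟩ hST.le)⟩

lemma eq_of_isFreeVertex {T' : G.Subgraph} (hT : T ∈ 𝒯) (hT' : T' ∈ 𝒯) {v : V}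
    (hv : IsFreeVertex 𝒯 T v) (hv' : IsFreeVertex 𝒯 T' v) : T = T' := by
  by_contra hne
  rcases h.nested_of_mem hT hT' hv.1 hv'.1 with hle | hle
  · exact hv'.2 T hT (hle.lt_of_ne hne) hv.1
  · exact hv.2 T' hT' (hle.lt_of_ne (Ne.symm hne)) hv'.1

end IsAdmissibleTubing

end Tubing

/-- in an admissible tubing, each tube has a unique vertex outside all strictly
smaller tubes of the tubing; this gives a bijection between the tubes and the vertices, so
the tubing has exactly `|V|` tubes. -/
theorem admissibleTubing_vertex_bijection {V : Type*} [Fintype V] (G : SimpleGraph V)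
    (𝒯 : Set G.Subgraph) (h : IsAdmissibleTubing G 𝒯) :
    (∀ T ∈ 𝒯, ∃! v : V, v ∈ T.verts ∧ ∀ S ∈ 𝒯, S < T → v ∉ S.verts) ∧
    (∃ g : V → G.Subgraph, IsVertexLabeling G 𝒯 g) ∧
    𝒯.ncard = Fintype.card V := by
  choose g hg𝒯 hg using h.exists_mem_isFreeVertex
  have hbij : Set.BijOn g Set.univ 𝒯 := by
    refine ⟨fun v _ => hg𝒯 v, fun v _ w _ hvw => ?_, fun T hT => ?_⟩
    · exact h.isFreeVertex_unique (hg𝒯 v) (hg v) (hvw ▸ hg w)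
    · obtain ⟨v, hv⟩ := h.exists_isFreeVertex hT
      exact ⟨v, Set.mem_univ v, h.eq_of_isFreeVertex (hg𝒯 v) hT (hg v) hv⟩
  refine ⟨fun T hT => ?_, ⟨g, hbij, hg⟩, ?_⟩
  · obtain ⟨v, hv⟩ := h.exists_isFreeVertex hT
    exact ⟨v, hv, fun w hw => h.isFreeVertex_unique hT hw hv⟩
  · rw [← hbij.ncard_eq, Set.ncard_univ, Nat.card_eq_fintype_card]

end Cosmo
end

section
/- Let G be a finite graph with no loops. Every admissible tubing {T_1,…,T_n} of G induces a unique acyclic orientation of G respecting the tubing, namely orienting each edge {v_i, v_j} as v_i → v_j when T_i ⊊ T_j (compatibility guarantees one of T_i ⊊ T_j or T_j ⊊ T_i holds); moreover, every acyclic orientation of G arises from some admissible tubing in this way. -/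
open SimpleGraph

namespace Cosmo

variable {V : Type*}

/-- `H` is an orientation of `G`: every edge gets exactly one direction. -/
def IsOrientation {V : Type*} (G : SimpleGraph V) (H : V → V → Prop) : Prop :=
  (∀ u v, (H u v ∨ H v u) ↔ G.Adj u v) ∧ ∀ u v, ¬(H u v ∧ H v u)

/-- A directed graph is acyclic if it has no directed cycles. -/
def IsAcyclicRel {V : Type*} (H : V → V → Prop) : Prop :=
  ∀ v, ¬ Relation.TransGen H v v

/-!
The labelling of an admissible tubing is strictly monotone along every edge, since the tubes of
adjacent vertices are compatible and distinct, hence nested; orienting each edge towards the larger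
tube is therefore acyclic, and it is the only orientation the labelling can respect.

Conversely, extend the reachability order of an acyclic orientation to a linear order on the
vertices, and let the tube of `v` be the induced subgraph on the vertices joined to `v` by a walk
staying weakly below `v`. Two such tubes that meet or are joined by an edge are nested, and a
connected induced subgraph compatible with all of them is the tube of its largest vertex: a walk
leaving it below that vertex would cross an edge into a tube it neither contains nor lies in.
-/

section Orientation

variable {G : SimpleGraph V} {H : V → V → Prop} {α : Type*} [Preorder α]

theorem IsOrientation.adj (hH : IsOrientation G H) {u v : V} (huv : H u v) : G.Adj u v :=
  (hH.1 u v).1 (Or.inl huv)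

theorem isAcyclicRel_of_forall_lt (f : V → α) (hf : ∀ u v, H u v → f u < f v) :
    IsAcyclicRel H := by
  intro v hv
  have key : ∀ {a b}, Relation.TransGen H a b → f a < f b := fun h =>
    h.trans_induction_on (fun h => hf _ _ h) fun _ _ => lt_trans
  exact lt_irrefl _ (key hv)

theorem isOrientation_adj_lt (f : V → α) (hf : ∀ u v, G.Adj u v → f u < f v ∨ f v < f u) :
    IsOrientation G fun u v => G.Adj u v ∧ f u < f v := by
  refine ⟨fun u v => ⟨?_, fun h => ?_⟩, fun u v ⟨⟨_, huv⟩, ⟨_, hvu⟩⟩ => lt_asymm huv hvu⟩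
  · rintro (⟨h, _⟩ | ⟨h, _⟩)
    exacts [h, h.symm]
  · exact (hf u v h).imp (⟨h, ·⟩) (⟨h.symm, ·⟩)

theorem IsOrientation.eq_adj_lt (hH : IsOrientation G H) (f : V → α)
    (hf : ∀ u v, H u v → f u < f v) : H = fun u v => G.Adj u v ∧ f u < f v := by
  ext u v
  refine ⟨fun h => ⟨hH.adj h, hf u v h⟩, fun ⟨hadj, hlt⟩ => ?_⟩
  exact ((hH.1 u v).2 hadj).resolve_right fun h => lt_asymm hlt (hf v u h)

theorem IsAcyclicRel.eq_of_reflTransGen (hH : IsAcyclicRel H) {u v : V}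
    (huv : Relation.ReflTransGen H u v) (hvu : Relation.ReflTransGen H v u) : u = v := by
  rcases huv.cases_head with rfl | ⟨w, huw, hwv⟩
  · rfl
  · exact (hH u (.head' huw (hwv.trans hvu))).elim

theorem IsAcyclicRel.exists_linearOrder (hH : IsAcyclicRel H) :
    ∃ o : LinearOrder V, ∀ u v, H u v → o.lt u v := by
  let _ : PartialOrder V :=
    { le := Relation.ReflTransGen H
      le_refl := fun _ => .refl
      le_trans := fun _ _ _ => .trans
      le_antisymm := fun _ _ => hH.eq_of_reflTransGen }
  refine ⟨(inferInstance : LinearOrder (LinearExtension V)), fun u v huv => ?_⟩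
  have hne : u ≠ v := by
    rintro rfl
    exact hH u (.single huv)
  exact lt_of_le_of_ne (toLinearExtension.monotone (Relation.ReflTransGen.single huv)) hne

end Orientation

section Labeling

variable {G : SimpleGraph V} {𝒯 : Set G.Subgraph} {g : V → G.Subgraph}

theorem IsVertexLabeling.injective (hg : IsVertexLabeling G 𝒯 g) : Function.Injective g :=
  fun _ _ h => hg.1.2.1 trivial trivial h

theorem IsAdmissibleTubing.lt_or_gt_of_adj (h𝒯 : IsAdmissibleTubing G 𝒯)
    (hg : IsVertexLabeling G 𝒯 g) {u v : V} (huv : G.Adj u v) : g u < g v ∨ g v < g u := by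
  have hne : g u ≠ g v := fun h => huv.ne (hg.injective h)
  have hnested : Nested (g u) (g v) := by
    by_contra hn
    exact h𝒯.1.2 (hg.1.1 trivial) (hg.1.1 trivial) hne
      ⟨⟨u, v, huv, (hg.2 u).1, (hg.2 v).1⟩, hn⟩
  exact hnested.imp (lt_of_le_of_ne · hne) (lt_of_le_of_ne · hne.symm)

end Labeling

section LowerTube

variable [LinearOrder V] (G : SimpleGraph V)

def lowerComponent (v : V) : Set V := {w | ∃ p : G.Walk w v, ∀ x ∈ p.support, x ≤ v}

def lowerTube (v : V) : G.Subgraph := (⊤ : G.Subgraph).induce (lowerComponent G v)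

variable {G}

theorem self_mem_lowerComponent (v : V) : v ∈ lowerComponent G v :=
  ⟨.nil, by simp⟩

theorem le_of_mem_lowerComponent {v w : V} (hw : w ∈ lowerComponent G v) : w ≤ v :=
  let ⟨p, hp⟩ := hw
  hp w p.start_mem_support

theorem mem_lowerComponent_of_adj {v w x : V} (hwv : w ≤ v) (hwx : G.Adj w x)
    (hx : x ∈ lowerComponent G v) : w ∈ lowerComponent G v := by
  obtain ⟨p, hp⟩ := hx
  refine ⟨.cons hwx p, fun y hy => ?_⟩
  rw [Walk.support_cons, List.mem_cons] at hy
  rcases hy with rfl | hy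
  exacts [hwv, hp y hy]

theorem mem_lowerComponent_of_mem_support {v w x : V} {p : G.Walk w v}
    (hp : ∀ y ∈ p.support, y ≤ v) (hx : x ∈ p.support) : x ∈ lowerComponent G v :=
  ⟨p.dropUntil x hx, fun y hy => hp y (p.support_dropUntil_subset_support hx hy)⟩

theorem lowerComponent_subset_of_le {u v : V} (huv : u ≤ v)
    (hne : (lowerComponent G u ∩ lowerComponent G v).Nonempty) :
    lowerComponent G u ⊆ lowerComponent G v := by
  obtain ⟨a, ⟨pau, hpau⟩, ⟨pav, hpav⟩⟩ := hne
  rintro t ⟨ptu, hptu⟩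
  refine ⟨(ptu.append pau.reverse).append pav, fun x hx => ?_⟩
  simp only [Walk.mem_support_append_iff, Walk.support_reverse, List.mem_reverse] at hx
  rcases hx with (hx | hx) | hx
  exacts [(hptu x hx).trans huv, (hpau x hx).trans huv, hpav x hx]

theorem subset_lowerComponent_of_connected {T : G.Subgraph} (hT : T.Connected) {v : V}
    (hv : v ∈ T.verts) (hle : ∀ x ∈ T.verts, x ≤ v) : T.verts ⊆ lowerComponent G v := by
  intro w hw
  obtain ⟨p, hpT⟩ := (Subgraph.connected_iff_forall_exists_walk_subgraph T).1 hT |>.2 hw hv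
  exact ⟨p, fun x hx => hle x (Subgraph.verts_mono hpT ((Walk.mem_verts_toSubgraph p).2 hx))⟩

theorem exists_adj_boundary_of_mem_lowerComponent {S : Set V} {v x : V}
    (hx : x ∈ lowerComponent G v) (hxS : x ∉ S) (hvS : v ∈ S) :
    ∃ a ∈ lowerComponent G v, ∃ b ∈ S, a ∉ S ∧ G.Adj a b := by
  obtain ⟨p, hp⟩ := hx
  obtain ⟨d, hd, haS, hbS⟩ := p.exists_boundary_dart Sᶜ hxS (not_not.2 hvS)
  exact ⟨d.fst, mem_lowerComponent_of_mem_support hp (p.dart_fst_mem_support_of_mem_darts hd),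
    d.snd, not_not.1 hbS, haS, d.adj⟩

theorem lowerTube_connected (v : V) : (lowerTube G v).Connected := by
  rw [lowerTube, ← connected_induce_iff]
  refine G.induce_connected_of_patches v (self_mem_lowerComponent v) fun {w} ⟨p, hp⟩ => ?_
  refine ⟨{x | x ∈ p.support}, fun x hx => mem_lowerComponent_of_mem_support hp hx,
    p.end_mem_support, p.start_mem_support, ?_⟩
  exact p.connected_induce_support.preconnected _ _

theorem lowerTube_isInduced (v : V) : (lowerTube G v).IsInduced :=
  (Subgraph.isInduced_iff_exists_eq_induce_top _).2 ⟨_, rfl⟩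

theorem lowerTube_injective : Function.Injective (lowerTube G) := by
  intro u v h
  have hcomp : lowerComponent G u = lowerComponent G v := congrArg Subgraph.verts h
  exact le_antisymm (le_of_mem_lowerComponent (hcomp ▸ self_mem_lowerComponent u))
    (le_of_mem_lowerComponent (hcomp ▸ self_mem_lowerComponent v))

theorem lowerTube_le_of_adj {u v a b : V} (huv : u ≤ v) (hab : G.Adj a b)
    (ha : a ∈ lowerComponent G u) (hb : b ∈ lowerComponent G v) :
    lowerTube G u ≤ lowerTube G v := by
  have ha' : a ∈ lowerComponent G v :=
    mem_lowerComponent_of_adj ((le_of_mem_lowerComponent ha).trans huv) hab hb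
  exact Subgraph.induce_mono le_rfl (lowerComponent_subset_of_le huv ⟨a, ha, ha'⟩)

theorem lowerTube_lt_of_adj {u v : V} (huv : u < v) (hadj : G.Adj u v) :
    lowerTube G u < lowerTube G v := by
  refine lt_of_le_of_ne ?_ fun h => huv.ne (lowerTube_injective h)
  exact lowerTube_le_of_adj huv.le hadj (self_mem_lowerComponent u) (self_mem_lowerComponent v)

theorem compatible_lowerTube (u v : V) : Compatible (lowerTube G u) (lowerTube G v) := by
  rintro ⟨⟨a, b, hab, ha, hb⟩, hnested⟩
  rcases le_total u v with huv | hvu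
  · exact hnested (.inl (lowerTube_le_of_adj huv hab ha hb))
  · exact hnested (.inr (lowerTube_le_of_adj hvu hab.symm hb ha))

theorem exists_lowerTube_eq_of_compatible [Finite V] {T : G.Subgraph} (hT : T.Connected)
    (hind : T.IsInduced) (hcompat : ∀ u, T ≠ lowerTube G u → Compatible T (lowerTube G u)) :
    ∃ v, lowerTube G v = T := by
  obtain ⟨v, hv, hmax⟩ := T.verts.exists_max_image id T.verts.toFinite hT.nonempty
  have hsub : T.verts ⊆ lowerComponent G v := subset_lowerComponent_of_connected hT hv hmax
  have hsup : lowerComponent G v ⊆ T.verts := by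
    intro x hx
    by_contra hxT
    obtain ⟨a, ha, b, hbT, haT, hab⟩ := exists_adj_boundary_of_mem_lowerComponent hx hxT hv
    have hne : T ≠ lowerTube G a := fun h => haT (h ▸ self_mem_lowerComponent a)
    refine hcompat a hne ⟨⟨b, a, hab.symm, hbT, self_mem_lowerComponent a⟩, ?_⟩
    rintro (hle | hle)
    · have hav : a = v :=
        le_antisymm (le_of_mem_lowerComponent ha) (le_of_mem_lowerComponent (hle.1 hv))
      exact haT (hav ▸ hv)
    · exact haT (hle.1 (self_mem_lowerComponent a))
  exact ⟨v, by rw [lowerTube, hsup.antisymm hsub, hind.induce_top_verts]⟩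

theorem isAdmissibleTubing_range_lowerTube [Finite V] :
    IsAdmissibleTubing G (Set.range (lowerTube G)) := by
  refine ⟨⟨?_, ?_⟩, fun 𝒞 h𝒞 hsub T hT => ?_⟩
  · rintro _ ⟨v, rfl⟩
    exact ⟨lowerTube_connected v, lowerTube_isInduced v⟩
  · rintro _ ⟨u, rfl⟩ _ ⟨v, rfl⟩ _
    exact compatible_lowerTube u v
  · obtain ⟨hconn, hind⟩ := h𝒞.1 T hT
    exact exists_lowerTube_eq_of_compatible hconn hind fun u hne =>
      h𝒞.2 hT (hsub ⟨u, rfl⟩) hne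

theorem isVertexLabeling_lowerTube :
    IsVertexLabeling G (Set.range (lowerTube G)) (lowerTube G) := by
  refine ⟨⟨fun v _ => ⟨v, rfl⟩, lowerTube_injective.injOn, ?_⟩,
    fun v => ⟨self_mem_lowerComponent v, ?_⟩⟩
  · rintro _ ⟨v, rfl⟩
    exact ⟨v, trivial, rfl⟩
  · rintro _ ⟨u, rfl⟩ hlt hv
    have huv : u = v := le_antisymm
      (le_of_mem_lowerComponent (hlt.le.1 (self_mem_lowerComponent u)))
      (le_of_mem_lowerComponent hv)
    exact hlt.ne (congrArg (lowerTube G) huv)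

end LowerTube

/-- every admissible tubing of a loopless graph induces a unique acyclic
orientation respecting it (edges are oriented towards strictly larger tubes), and every
acyclic orientation arises from some admissible tubing in this way. -/
theorem acyclicOrientation_of_admissibleTubing {V : Type*} [Fintype V] (G : SimpleGraph V) :
    (∀ (𝒯 : Set G.Subgraph) (g : V → G.Subgraph),
      IsAdmissibleTubing G 𝒯 → IsVertexLabeling G 𝒯 g →
      ∃! H : V → V → Prop, IsOrientation G H ∧ IsAcyclicRel H ∧
        ∀ u v, H u v → g u < g v) ∧
    (∀ H : V → V → Prop, IsOrientation G H → IsAcyclicRel H →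
      ∃ (𝒯 : Set G.Subgraph) (g : V → G.Subgraph),
        IsAdmissibleTubing G 𝒯 ∧ IsVertexLabeling G 𝒯 g ∧
        ∀ u v, H u v → g u < g v) := by
  refine ⟨fun 𝒯 g h𝒯 hg => ?_, fun H hH hacyc => ?_⟩
  · refine ⟨fun u v => G.Adj u v ∧ g u < g v, ⟨?_, ?_, fun _ _ h => h.2⟩, ?_⟩
    · exact isOrientation_adj_lt g fun _ _ => h𝒯.lt_or_gt_of_adj hg
    · exact isAcyclicRel_of_forall_lt g fun _ _ h => h.2
    · exact fun H ⟨hH, _, hHg⟩ => hH.eq_adj_lt g hHg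
  · obtain ⟨o, ho⟩ := hacyc.exists_linearOrder
    let _ := o
    exact ⟨_, _, isAdmissibleTubing_range_lowerTube, isVertexLabeling_lowerTube,
      fun u v huv => lowerTube_lt_of_adj (ho u v huv) (hH.adj huv)⟩

end Cosmo
end

section
/- For overlapping tubes S, T of a graph G, if S ∩ T is written as a disjoint union of tubes U_1, …, U_k (its connected components), then the linear forms satisfy ℓ_S + ℓ_T = ℓ_{S∪T} + Σ_i ℓ_{U_i}. -/
open SimpleGraph

namespace Cosmo

variable {V : Type*}

open scoped Classical in
/-- The linear form `ℓ_T` attached to a tube `T` of `G`, evaluated at `(X, Y)`: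
`ℓ_T = Σ_{v ∈ T} X_v + Σ_{e crossing T} Y_e + Σ_{e ∉ T between vertices of T} 2 Y_e`. -/
noncomputable def ell {V : Type*} [Fintype V] [DecidableEq V] (G : SimpleGraph V)
    (T : G.Subgraph) (X : V → ℝ) (Y : Sym2 V → ℝ) : ℝ :=
  (∑ v : V, if v ∈ T.verts then X v else 0)
  + (∑ e : Sym2 V, if e ∈ G.edgeSet ∧ ∃ u w, e = s(u, w) ∧ u ∈ T.verts ∧ w ∉ T.verts
      then Y e else 0)
  + (∑ e : Sym2 V, if e ∈ G.edgeSet ∧ (∀ u ∈ e, u ∈ T.verts) ∧ e ∉ T.edgeSet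
      then 2 * Y e else 0)

/-- `𝒰` is the set of connected components of the subgraph `W`. -/
def IsComponents {V : Type*} (G : SimpleGraph V) (W : G.Subgraph) (𝒰 : Finset G.Subgraph) :
    Prop :=
  (∀ U ∈ 𝒰, U.Connected ∧ U ≤ W) ∧
  ((𝒰 : Set G.Subgraph).Pairwise fun U U' => Disjoint U.verts U'.verts) ∧
  (⋃ U ∈ 𝒰, Subgraph.verts U) = W.verts ∧
  (⋃ U ∈ 𝒰, Subgraph.edgeSet U) = W.edgeSet

section Aux

variable {V : Type*} [Fintype V] [DecidableEq V] (G : SimpleGraph V)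

open scoped Classical

/-- Vertex indicator of a subgraph. -/
noncomputable def vi (T : G.Subgraph) (v : V) : ℝ := if v ∈ T.verts then 1 else 0

/-- Edge indicator of a subgraph. -/
noncomputable def ei (T : G.Subgraph) (e : Sym2 V) : ℝ := if e ∈ T.edgeSet then 1 else 0

/-- Coefficient of `Y e` in `ell`. -/
noncomputable def ec (T : G.Subgraph) (e : Sym2 V) : ℝ :=
  if e ∈ G.edgeSet then
    Sym2.lift ⟨fun u w => vi G T u + vi G T w, fun u w => add_comm _ _⟩ e - 2 * ei G T e
  else 0

lemma ec_pointwise (T : G.Subgraph) (Y : Sym2 V → ℝ) (u w : V) :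
    (if s(u, w) ∈ G.edgeSet ∧ ∃ a b, s(u, w) = s(a, b) ∧ a ∈ T.verts ∧ b ∉ T.verts
      then Y s(u, w) else 0)
    + (if s(u, w) ∈ G.edgeSet ∧ (∀ x ∈ s(u, w), x ∈ T.verts) ∧ s(u, w) ∉ T.edgeSet
      then 2 * Y s(u, w) else 0)
    = ec G T s(u, w) * Y s(u, w) := by
  by_cases hE : s(u, w) ∈ G.edgeSet
  · have hlift : ec G T s(u, w)
        = (if u ∈ T.verts then (1 : ℝ) else 0) + (if w ∈ T.verts then (1 : ℝ) else 0)
          - 2 * (if s(u, w) ∈ T.edgeSet then (1 : ℝ) else 0) := by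
      unfold ec vi ei
      rw [if_pos hE, Sym2.lift_mk]
    rw [hlift]
    by_cases hu : u ∈ T.verts <;> by_cases hw : w ∈ T.verts
    · have hne : ¬ (s(u, w) ∈ G.edgeSet ∧
          ∃ a b, s(u, w) = s(a, b) ∧ a ∈ T.verts ∧ b ∉ T.verts) := by
        rintro ⟨-, a, b, he, ha, hb⟩
        rw [Sym2.eq_iff] at he
        rcases he with ⟨rfl, rfl⟩ | ⟨rfl, rfl⟩ <;> exact hb ‹_›
      have hall : ∀ x ∈ s(u, w), x ∈ T.verts := by
        intro x hx; rw [Sym2.mem_iff] at hx; rcases hx with rfl | rfl <;> assumption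
      rw [if_neg hne, if_pos hu, if_pos hw]
      by_cases hte : s(u, w) ∈ T.edgeSet
      · rw [if_pos hte, if_neg (fun h => h.2.2 hte)]; ring
      · rw [if_neg hte, if_pos ⟨hE, hall, hte⟩]; ring
    · have hte : s(u, w) ∉ T.edgeSet := by
        intro h; rw [Subgraph.mem_edgeSet] at h; exact hw h.symm.fst_mem
      have hnall : ¬ (s(u, w) ∈ G.edgeSet ∧ (∀ x ∈ s(u, w), x ∈ T.verts)
          ∧ s(u, w) ∉ T.edgeSet) := fun h => hw (h.2.1 w (by simp))
      rw [if_pos ⟨hE, u, w, rfl, hu, hw⟩, if_neg hnall, if_pos hu, if_neg hw, if_neg hte]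
      ring
    · have hte : s(u, w) ∉ T.edgeSet := by
        intro h; rw [Subgraph.mem_edgeSet] at h; exact hu h.fst_mem
      have hnall : ¬ (s(u, w) ∈ G.edgeSet ∧ (∀ x ∈ s(u, w), x ∈ T.verts)
          ∧ s(u, w) ∉ T.edgeSet) := fun h => hu (h.2.1 u (by simp))
      rw [if_pos ⟨hE, w, u, Sym2.eq_swap, hw, hu⟩, if_neg hnall, if_neg hu, if_pos hw,
        if_neg hte]
      ring
    · have hte : s(u, w) ∉ T.edgeSet := by
        intro h; rw [Subgraph.mem_edgeSet] at h; exact hu h.fst_mem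
      have hne : ¬ (s(u, w) ∈ G.edgeSet ∧
          ∃ a b, s(u, w) = s(a, b) ∧ a ∈ T.verts ∧ b ∉ T.verts) := by
        rintro ⟨-, a, b, he, ha, hb⟩
        rw [Sym2.eq_iff] at he
        rcases he with ⟨rfl, rfl⟩ | ⟨rfl, rfl⟩ <;> [exact hu ha; exact hw ha]
      have hnall : ¬ (s(u, w) ∈ G.edgeSet ∧ (∀ x ∈ s(u, w), x ∈ T.verts)
          ∧ s(u, w) ∉ T.edgeSet) := fun h => hu (h.2.1 u (by simp))
      rw [if_neg hne, if_neg hnall, if_neg hu, if_neg hw, if_neg hte]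
      ring
  · rw [if_neg (fun h => hE h.1), if_neg (fun h => hE h.1)]
    unfold ec
    rw [if_neg hE]
    ring

lemma ell_eq (T : G.Subgraph) (X : V → ℝ) (Y : Sym2 V → ℝ) :
    ell G T X Y = (∑ v : V, vi G T v * X v) + ∑ e : Sym2 V, ec G T e * Y e := by
  unfold ell
  rw [add_assoc]
  congr 1
  · refine Finset.sum_congr rfl fun v _ => ?_
    unfold vi
    split_ifs <;> simp
  · rw [← Finset.sum_add_distrib]
    refine Finset.sum_congr rfl fun e _ => ?_
    induction e using Sym2.inductionOn with
    | hf u w => exact ec_pointwise G T Y u w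

end Aux

/-- for overlapping tubes `S, T` with `S ∩ T` the disjoint union of tubes
`U_1, …, U_k` (its connected components), `ℓ_S + ℓ_T = ℓ_{S ∪ T} + Σ_i ℓ_{U_i}`. -/
theorem ell_overlapping {V : Type*} [Fintype V] [DecidableEq V] (G : SimpleGraph V)
    (S T : G.Subgraph) (hS : IsTube G S) (hT : IsTube G T) (hov : Overlapping S T)
    (𝒰 : Finset G.Subgraph) (h𝒰 : IsComponents G (S ⊓ T) 𝒰)
    (X : V → ℝ) (Y : Sym2 V → ℝ) :
    ell G S X Y + ell G T X Y = ell G (S ⊔ T) X Y + ∑ U ∈ 𝒰, ell G U X Y := by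
  classical
  obtain ⟨hconn, hdisj, hv, he⟩ := h𝒰
  -- vertex indicators of the inf decompose as a sum over components
  have key_v : ∀ v : V, vi G (S ⊓ T) v = ∑ U ∈ 𝒰, vi G U v := by
    intro v
    unfold vi
    by_cases h : v ∈ (S ⊓ T).verts
    · have : v ∈ ⋃ U ∈ 𝒰, Subgraph.verts U := hv ▸ h
      simp only [Set.mem_iUnion, exists_prop] at this
      obtain ⟨U0, hU0, hvU0⟩ := this
      rw [if_pos h, Finset.sum_eq_single_of_mem U0 hU0 fun U hU hne => ?_, if_pos hvU0]
      rw [if_neg]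
      intro hvU
      exact Set.disjoint_left.mp (hdisj hU hU0 hne) hvU hvU0
    · rw [if_neg h]
      symm
      refine Finset.sum_eq_zero fun U hU => ?_
      rw [if_neg]
      intro hvU
      exact h (hv ▸ (Set.mem_iUnion₂.mpr ⟨U, hU, hvU⟩))
  -- edge indicators of the inf decompose as a sum over components
  have key_e : ∀ e : Sym2 V, ei G (S ⊓ T) e = ∑ U ∈ 𝒰, ei G U e := by
    intro e
    unfold ei
    by_cases h : e ∈ (S ⊓ T).edgeSet
    · have : e ∈ ⋃ U ∈ 𝒰, Subgraph.edgeSet U := he ▸ h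
      simp only [Set.mem_iUnion, exists_prop] at this
      obtain ⟨U0, hU0, heU0⟩ := this
      rw [if_pos h, Finset.sum_eq_single_of_mem U0 hU0 fun U hU hne => ?_, if_pos heU0]
      rw [if_neg]
      intro heU
      induction e using Sym2.inductionOn with
      | hf u w =>
        rw [Subgraph.mem_edgeSet] at heU heU0
        exact Set.disjoint_left.mp (hdisj hU hU0 hne) heU.fst_mem heU0.fst_mem
    · rw [if_neg h]
      symm
      refine Finset.sum_eq_zero fun U hU => ?_
      rw [if_neg]
      intro heU
      exact h (he ▸ (Set.mem_iUnion₂.mpr ⟨U, hU, heU⟩))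
  -- pointwise identities for sup/inf
  have pv : ∀ v : V, vi G S v + vi G T v = vi G (S ⊔ T) v + vi G (S ⊓ T) v := by
    intro v
    unfold vi
    rw [Subgraph.verts_sup, Subgraph.verts_inf]
    by_cases hs : v ∈ S.verts <;> by_cases ht : v ∈ T.verts <;> simp [hs, ht]
  have pe : ∀ e : Sym2 V, ec G S e + ec G T e = ec G (S ⊔ T) e + ec G (S ⊓ T) e := by
    intro e
    induction e using Sym2.inductionOn with
    | hf u w =>
      unfold ec
      by_cases hE : s(u, w) ∈ G.edgeSet
      · simp only [hE, if_true, Sym2.lift_mk]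
        have hei : ei G S s(u, w) + ei G T s(u, w)
            = ei G (S ⊔ T) s(u, w) + ei G (S ⊓ T) s(u, w) := by
          unfold ei
          rw [Subgraph.edgeSet_sup, Subgraph.edgeSet_inf]
          by_cases hs : s(u, w) ∈ S.edgeSet <;> by_cases ht : s(u, w) ∈ T.edgeSet <;>
            simp [hs, ht]
        have h1 := pv u
        have h2 := pv w
        linarith
      · simp [hE]
  rw [ell_eq, ell_eq, ell_eq]
  have hsum : ∑ U ∈ 𝒰, ell G U X Y
      = (∑ v : V, (∑ U ∈ 𝒰, vi G U v) * X v) + ∑ e : Sym2 V, (∑ U ∈ 𝒰, ec G U e) * Y e := by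
    rw [Finset.sum_congr rfl fun U _ => ell_eq G U X Y, Finset.sum_add_distrib,
      Finset.sum_comm, Finset.sum_comm (s := 𝒰)]
    simp [Finset.sum_mul]
  rw [hsum]
  have hce : ∀ e : Sym2 V, ∑ U ∈ 𝒰, ec G U e = ec G (S ⊓ T) e := by
    intro e
    induction e using Sym2.inductionOn with
    | hf u w =>
      unfold ec
      by_cases hE : s(u, w) ∈ G.edgeSet
      · simp only [hE, if_true, Sym2.lift_mk, key_v u, key_v w, key_e]
        rw [Finset.sum_sub_distrib, Finset.sum_add_distrib, Finset.mul_sum]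
      · simp [hE]
  have A : (∑ v : V, vi G S v * X v) + (∑ v : V, vi G T v * X v)
      = (∑ v : V, vi G (S ⊔ T) v * X v) + ∑ v : V, (∑ U ∈ 𝒰, vi G U v) * X v := by
    rw [← Finset.sum_add_distrib, ← Finset.sum_add_distrib]
    refine Finset.sum_congr rfl fun v _ => ?_
    rw [← add_mul, ← add_mul, pv v, key_v v]
  have B : (∑ e : Sym2 V, ec G S e * Y e) + (∑ e : Sym2 V, ec G T e * Y e)
      = (∑ e : Sym2 V, ec G (S ⊔ T) e * Y e) + ∑ e : Sym2 V, (∑ U ∈ 𝒰, ec G U e) * Y e := by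
    rw [← Finset.sum_add_distrib, ← Finset.sum_add_distrib]
    refine Finset.sum_congr rfl fun e _ => ?_
    rw [← add_mul, ← add_mul, pe e, hce e]
  linarith [A, B]

end Cosmo
end

section
/- A collection of tubes T is a complete tubing of a graph G if and only if T is the disjoint union of {G} and a complete tubing of G∖e for a unique edge e of G, assuming G is connected with at least one edge. Here e is the unique edge of G lying outside every proper tube of T. -/
open SimpleGraph

namespace Cosmo

variable {V : Type*}

/-!
Let `e` be an edge of `G` lying in no proper tube of a complete tubing `𝒯`; such an edge exists
because a maximal proper tube `M` of `𝒯` is left by some edge of `G` with an endpoint in `M`, and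
every proper tube containing that edge would lie in `M`. The tubes of `G∖e` are exactly the tubes
of `G` avoiding `e`, with the same overlaps, so `𝒯 ∖ {G}` is a complete tubing of `G∖e`.
Conversely `{G}` together with a complete tubing of `G∖e` is complete: the tubing contains the
(at most two) components of `G∖e`, and a tube containing `e` and compatible with them contains
both, hence is all of `G`. Uniqueness of `e` holds because every other edge lies in a component
of `G∖e`, which is a proper tube.
-/

section

variable {G H : SimpleGraph V}

lemma overlapping_comm {S T : G.Subgraph} : Overlapping S T ↔ Overlapping T S := by
  simp only [Overlapping, Nested, Set.inter_comm, or_comm]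

lemma not_overlapping_self (S : G.Subgraph) : ¬ Overlapping S S :=
  fun h => h.2 (Or.inl le_rfl)

lemma not_overlapping_top_left (S : G.Subgraph) : ¬ Overlapping ⊤ S :=
  fun h => h.2 (Or.inr le_top)

lemma not_overlapping_top_right (S : G.Subgraph) : ¬ Overlapping S ⊤ :=
  fun h => h.2 (Or.inl le_top)

lemma isTube_top (hG : G.Connected) : IsTube G ⊤ :=
  Subgraph.connected_iff'.mpr (Subgraph.topIso.connected_iff.mpr hG)

lemma nested_of_not_overlapping {S T : G.Subgraph} (h : ¬ Overlapping S T)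
    (hST : (S.verts ∩ T.verts).Nonempty) : Nested S T :=
  not_not.mp (not_and.mp h hST)

lemma isCompleteTubing_iff {𝒯 : Set G.Subgraph} :
    IsCompleteTubing G 𝒯 ↔ (∀ T ∈ 𝒯, IsTube G T) ∧ 𝒯.Pairwise (fun S T => ¬ Overlapping S T) ∧
      ∀ X, IsTube G X → (∀ T ∈ 𝒯, ¬ Overlapping X T) → X ∈ 𝒯 := by
  refine ⟨fun ⟨⟨hTube, hPair⟩, hMax⟩ => ⟨hTube, hPair, fun X hX hXT => ?_⟩,
    fun ⟨hTube, hPair, hMax⟩ => ⟨⟨hTube, hPair⟩, fun 𝒞 h𝒞 hsub X hX => ?_⟩⟩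
  · refine hMax ⟨Set.forall_mem_insert.mpr ⟨hX, hTube⟩, Set.pairwise_insert.mpr ⟨hPair, ?_⟩⟩
      (Set.subset_insert X 𝒯) (Set.mem_insert X 𝒯)
    exact fun T hT _ => ⟨hXT T hT, overlapping_comm.not.mp (hXT T hT)⟩
  · refine hMax X (h𝒞.1 X hX) fun T hT => ?_
    obtain rfl | hne := eq_or_ne X T
    · exact not_overlapping_self X
    · exact h𝒞.2 hX (hsub hT) hne

namespace IsCompleteTubing

variable {𝒯 : Set G.Subgraph}

lemma isTube (h𝒯 : IsCompleteTubing G 𝒯) {T : G.Subgraph} (hT : T ∈ 𝒯) : IsTube G T :=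
  h𝒯.1.1 T hT

lemma not_overlapping (h𝒯 : IsCompleteTubing G 𝒯) {S T : G.Subgraph} (hS : S ∈ 𝒯) (hT : T ∈ 𝒯)
    (hne : S ≠ T) : ¬ Overlapping S T :=
  h𝒯.1.2 hS hT hne

lemma nested (h𝒯 : IsCompleteTubing G 𝒯) {S T : G.Subgraph} (hS : S ∈ 𝒯) (hT : T ∈ 𝒯)
    (hST : (S.verts ∩ T.verts).Nonempty) : Nested S T := by
  obtain rfl | hne := eq_or_ne S T
  · exact Or.inl le_rfl
  · exact nested_of_not_overlapping (h𝒯.not_overlapping hS hT hne) hST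

lemma mem_of_forall_not_overlapping (h𝒯 : IsCompleteTubing G 𝒯) {X : G.Subgraph} (hX : IsTube G X)
    (hXT : ∀ T ∈ 𝒯, ¬ Overlapping X T) : X ∈ 𝒯 :=
  (isCompleteTubing_iff.mp h𝒯).2.2 X hX hXT

lemma top_mem (h𝒯 : IsCompleteTubing G 𝒯) (hG : G.Connected) : (⊤ : G.Subgraph) ∈ 𝒯 :=
  h𝒯.mem_of_forall_not_overlapping (isTube_top hG) fun T _ => not_overlapping_top_left T

lemma singletonSubgraph_mem (h𝒯 : IsCompleteTubing G 𝒯) (v : V) : G.singletonSubgraph v ∈ 𝒯 := by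
  refine h𝒯.mem_of_forall_not_overlapping Subgraph.singletonSubgraph_connected ?_
  rintro T - ⟨⟨z, rfl, hz⟩, hnest⟩
  exact hnest (Or.inl ((G.singletonSubgraph_le_iff z T).mpr hz))

end IsCompleteTubing

lemma _root_.SimpleGraph.Subgraph.Connected.le_toSubgraph {T : G.Subgraph} (hT : T.Connected)
    {C : G.ConnectedComponent} {z : V} (hzT : z ∈ T.verts) (hzC : z ∈ C.supp) :
    T ≤ C.toSubgraph := by
  refine Subgraph.le_induce_top_verts.trans (Subgraph.induce_mono_right fun u hu => ?_)
  rw [ConnectedComponent.mem_supp_iff] at hzC ⊢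
  exact hzC ▸ ConnectedComponent.sound ((hT.preconnected ⟨u, hu⟩ ⟨z, hzT⟩).map T.hom)

lemma _root_.SimpleGraph.ConnectedComponent.toSubgraph_adj_of_mem {C : G.ConnectedComponent}
    {a b : V} (ha : a ∈ C.supp) (hab : G.Adj a b) : C.toSubgraph.Adj a b := by
  refine ⟨ha, ?_, hab⟩
  rw [ConnectedComponent.mem_supp_iff] at ha ⊢
  exact ha ▸ ConnectedComponent.sound hab.reachable.symm

lemma IsCompleteTubing.toSubgraph_mem {𝒯 : Set G.Subgraph} (h𝒯 : IsCompleteTubing G 𝒯)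
    (C : G.ConnectedComponent) : C.toSubgraph ∈ 𝒯 := by
  refine h𝒯.mem_of_forall_not_overlapping C.connected_toSubgraph ?_
  rintro T hT ⟨⟨z, hzC, hzT⟩, hnest⟩
  exact hnest (Or.inr ((h𝒯.isTube hT).le_toSubgraph hzT hzC))

lemma IsCompleteTubing.exists_mem_edgeSet {𝒯 : Set G.Subgraph} (h𝒯 : IsCompleteTubing G 𝒯)
    {e : Sym2 V} (he : e ∈ G.edgeSet) : ∃ T ∈ 𝒯, e ∈ T.edgeSet := by
  induction e using Sym2.ind with
  | _ a b =>
    exact ⟨_, h𝒯.toSubgraph_mem (G.connectedComponentMk a),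
      ConnectedComponent.toSubgraph_adj_of_mem ConnectedComponent.connectedComponentMk_mem he⟩

lemma _root_.SimpleGraph.Subgraph.exists_adj_not_adj_of_ne_top (hG : G.Connected)
    {M : G.Subgraph} (hM : M.verts.Nonempty) (hMtop : M ≠ ⊤) :
    ∃ a b, G.Adj a b ∧ a ∈ M.verts ∧ ¬ M.Adj a b := by
  by_cases hv : M.verts = Set.univ
  · by_contra! h
    exact hMtop (eq_top_iff.mpr ⟨hv.ge, fun a b hab => h a b hab (hv ▸ Set.mem_univ a)⟩)
  · obtain ⟨y, hy⟩ := (Set.ne_univ_iff_exists_notMem _).mp hv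
    obtain ⟨x, hx⟩ := hM
    obtain ⟨d, -, hd, hd'⟩ := (hG.preconnected x y).some.exists_boundary_dart _ hx hy
    exact ⟨d.fst, d.snd, d.adj, hd, fun h => hd' (M.edge_vert h.symm)⟩

lemma IsCompleteTubing.exists_edge_forall_ne_top_notMem [Finite V] {𝒯 : Set G.Subgraph}
    (h𝒯 : IsCompleteTubing G 𝒯) (hG : G.Connected) (hE : G.edgeSet.Nonempty) :
    ∃ e ∈ G.edgeSet, ∀ T ∈ 𝒯, T ≠ ⊤ → e ∉ T.edgeSet := by
  obtain ⟨e₀, he₀⟩ := hE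
  induction e₀ using Sym2.ind with
  | _ u w =>
    have hsingle : G.singletonSubgraph u ≠ ⊤ := fun h => (G.mem_edgeSet.mp he₀).ne <| by
      have hw : w ∈ (G.singletonSubgraph u).verts := h ▸ Set.mem_univ w
      exact (Set.mem_singleton_iff.mp hw).symm
    obtain ⟨M, -, ⟨hM𝒯, hMtop⟩, hMmax⟩ :=
      Finite.exists_le_maximal (p := fun T => T ∈ 𝒯 ∧ T ≠ ⊤) ⟨h𝒯.singletonSubgraph_mem u, hsingle⟩
    obtain ⟨a, b, hab, haM, hnM⟩ :=
      Subgraph.exists_adj_not_adj_of_ne_top hG (h𝒯.isTube hM𝒯).nonempty hMtop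
    refine ⟨s(a, b), hab, fun T hT hTtop habT => hnM ?_⟩
    have hTM : T ≤ M :=
      (h𝒯.nested hT hM𝒯 ⟨a, T.edge_vert habT, haM⟩).elim id (hMmax ⟨hT, hTtop⟩)
    exact hTM.2 habT

@[simp] lemma map_ofLE_verts (h : H ≤ G) (S : H.Subgraph) :
    (S.map (Hom.ofLE h)).verts = S.verts := by
  simp

@[simp] lemma map_ofLE_adj (h : H ≤ G) (S : H.Subgraph) {a b : V} :
    (S.map (Hom.ofLE h)).Adj a b ↔ S.Adj a b := by
  simp [Relation.Map]

lemma map_ofLE_le_map_ofLE (h : H ≤ G) {S T : H.Subgraph} :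
    S.map (Hom.ofLE h) ≤ T.map (Hom.ofLE h) ↔ S ≤ T := by
  refine ⟨fun hST => ⟨?_, fun a b hab => ?_⟩, Subgraph.map_mono⟩
  · simpa using hST.1
  · simpa using hST.2 ((map_ofLE_adj h S).mpr hab)

lemma map_ofLE_injective (h : H ≤ G) : Function.Injective (Subgraph.map (Hom.ofLE h)) :=
  fun _ _ hST =>
    le_antisymm ((map_ofLE_le_map_ofLE h).mp hST.le) ((map_ofLE_le_map_ofLE h).mp hST.ge)

lemma overlapping_map_ofLE_iff (h : H ≤ G) {S T : H.Subgraph} :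
    Overlapping (S.map (Hom.ofLE h)) (T.map (Hom.ofLE h)) ↔ Overlapping S T := by
  simp only [Overlapping, Nested, map_ofLE_verts, map_ofLE_le_map_ofLE]

lemma connected_map_ofLE_iff (h : H ≤ G) {S : H.Subgraph} :
    (S.map (Hom.ofLE h)).Connected ↔ S.Connected := by
  rw [Subgraph.connected_iff', Subgraph.connected_iff']
  exact Iso.connected_iff
    { toEquiv := Equiv.setCongr (map_ofLE_verts h S)
      map_rel_iff' := by simp }

lemma map_ofLE_comap_ofLE (h : H ≤ G) {S : G.Subgraph} (hS : ∀ ⦃a b⦄, S.Adj a b → H.Adj a b) :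
    (S.comap (Hom.ofLE h)).map (Hom.ofLE h) = S := by
  ext <;> simp +contextual [hS]

lemma map_ofLE_ne_top (h : H ≤ G) (hne : H ≠ G) (S : H.Subgraph) : S.map (Hom.ofLE h) ≠ ⊤ := by
  intro hS
  refine hne (le_antisymm h fun a b hab => S.adj_sub ?_)
  rw [← map_ofLE_adj h, hS]
  exact hab

variable {e : Sym2 V}

lemma mem_range_map_ofLE_deleteEdges {S : G.Subgraph} (hS : e ∉ S.edgeSet) :
    S ∈ Set.range (Subgraph.map (Hom.ofLE (G.deleteEdges_le {e}))) :=
  ⟨_, map_ofLE_comap_ofLE _ fun _ _ hab =>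
    deleteEdges_adj.mpr ⟨S.adj_sub hab, fun he => hS (Set.mem_singleton_iff.mp he ▸ hab)⟩⟩

lemma IsCompleteTubing.preimage_map_ofLE_deleteEdges {𝒯 : Set G.Subgraph}
    (h𝒯 : IsCompleteTubing G 𝒯) (hunc : ∀ T ∈ 𝒯, T ≠ ⊤ → e ∉ T.edgeSet) :
    IsCompleteTubing (G.deleteEdges {e})
      (Subgraph.map (Hom.ofLE (G.deleteEdges_le {e})) ⁻¹' 𝒯) := by
  refine isCompleteTubing_iff.mpr ⟨fun T hT => (connected_map_ofLE_iff _).mp (h𝒯.isTube hT),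
    fun S hS T hT hne hST => h𝒯.not_overlapping hS hT ((map_ofLE_injective _).ne hne)
      ((overlapping_map_ofLE_iff _).mpr hST), fun X hX hXT => ?_⟩
  refine h𝒯.mem_of_forall_not_overlapping ((connected_map_ofLE_iff _).mpr hX) fun T hT => ?_
  obtain rfl | hTtop := eq_or_ne T ⊤
  · exact not_overlapping_top_right _
  obtain ⟨T', rfl⟩ := mem_range_map_ofLE_deleteEdges (hunc T hT hTtop)
  exact (overlapping_map_ofLE_iff _).not.mpr (hXT T' hT)

lemma IsCompleteTubing.eq_insert_top_image_preimage {𝒯 : Set G.Subgraph}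
    (h𝒯 : IsCompleteTubing G 𝒯) (hG : G.Connected) (hunc : ∀ T ∈ 𝒯, T ≠ ⊤ → e ∉ T.edgeSet) :
    𝒯 = insert ⊤ (Subgraph.map (Hom.ofLE (G.deleteEdges_le {e})) ''
      (Subgraph.map (Hom.ofLE (G.deleteEdges_le {e})) ⁻¹' 𝒯)) := by
  rw [Set.image_preimage_eq_inter_range]
  ext T
  refine ⟨fun hT => ?_, ?_⟩
  · obtain rfl | hTtop := eq_or_ne T ⊤
    · exact Set.mem_insert _ _
    · exact Set.mem_insert_of_mem _ ⟨hT, mem_range_map_ofLE_deleteEdges (hunc T hT hTtop)⟩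
  · rintro (rfl | ⟨hT, -⟩)
    exacts [h𝒯.top_mem hG, hT]

lemma reachable_or_reachable_deleteEdges (hG : G.Connected) (u w z : V) :
    (G.deleteEdges {s(u, w)}).Reachable u z ∨ (G.deleteEdges {s(u, w)}).Reachable w z := by
  induction (reachable_iff_reflTransGen u z).mp (hG.preconnected u z) with
  | refl => exact Or.inl .rfl
  | @tail b c _ hbc ih =>
    by_cases he : s(b, c) = s(u, w)
    · rcases Sym2.eq_iff.mp he with ⟨-, rfl⟩ | ⟨-, rfl⟩
      · exact Or.inr .rfl
      · exact Or.inl .rfl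
    · have hadj : (G.deleteEdges {s(u, w)}).Adj b c := deleteEdges_adj.mpr ⟨hbc, he⟩
      exact ih.imp (·.trans hadj.reachable) (·.trans hadj.reachable)

lemma eq_top_of_adj_of_map_toSubgraph_le (hG : G.Connected) {U : G.Subgraph} {u w : V}
    (huw : U.Adj u w)
    (hle : ∀ x ∈ U.verts, ((G.deleteEdges {s(u, w)}).connectedComponentMk x).toSubgraph.map
      (Hom.ofLE (G.deleteEdges_le _)) ≤ U) : U = ⊤ := by
  have hcomp : ∀ z, ∃ x ∈ U.verts, z ∈ ((G.deleteEdges {s(u, w)}).connectedComponentMk x).supp :=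
    fun z => (reachable_or_reachable_deleteEdges hG u w z).elim
      (fun h => ⟨u, U.edge_vert huw, ConnectedComponent.sound h.symm⟩)
      (fun h => ⟨w, U.edge_vert huw.symm, ConnectedComponent.sound h.symm⟩)
  refine eq_top_iff.mpr ⟨fun z _ => ?_, fun a b hab => ?_⟩
  · obtain ⟨x, hx, hz⟩ := hcomp z
    exact (hle x hx).1 (by simpa using hz)
  · by_cases he : s(a, b) = s(u, w)
    · rcases Sym2.eq_iff.mp he with ⟨rfl, rfl⟩ | ⟨rfl, rfl⟩
      exacts [huw, huw.symm]
    · obtain ⟨x, hx, ha⟩ := hcomp a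
      exact (hle x hx).2 ((map_ofLE_adj _ _).mpr
        (ConnectedComponent.toSubgraph_adj_of_mem ha (deleteEdges_adj.mpr ⟨hab, he⟩)))

lemma IsCompleteTubing.notMem_edgeSet_of_forall_not_overlapping (hG : G.Connected)
    {𝒯' : Set (G.deleteEdges {e}).Subgraph} (h𝒯' : IsCompleteTubing (G.deleteEdges {e}) 𝒯')
    {X : G.Subgraph} (hXtop : X ≠ ⊤)
    (hXT : ∀ T' ∈ 𝒯', ¬ Overlapping X (T'.map (Hom.ofLE (G.deleteEdges_le {e})))) :
    e ∉ X.edgeSet := by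
  induction e using Sym2.ind with
  | _ u w =>
    intro huw
    refine hXtop (eq_top_of_adj_of_map_toSubgraph_le hG huw fun x hx => ?_)
    refine (nested_of_not_overlapping (hXT _ (h𝒯'.toSubgraph_mem _))
      ⟨x, hx, by simp⟩).resolve_left fun hle => ?_
    exact (deleteEdges_adj.mp (((map_ofLE_adj _ _).mp (hle.2 huw)).adj_sub)).2 rfl

lemma isCompleteTubing_insert_top_image (hG : G.Connected)
    {𝒯' : Set (G.deleteEdges {e}).Subgraph} (h𝒯' : IsCompleteTubing (G.deleteEdges {e}) 𝒯') :
    IsCompleteTubing G (insert ⊤ (Subgraph.map (Hom.ofLE (G.deleteEdges_le {e})) '' 𝒯')) := by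
  refine isCompleteTubing_iff.mpr ⟨?_, ?_, fun X hX hXT => ?_⟩
  · rintro T (rfl | ⟨T', hT', rfl⟩)
    · exact isTube_top hG
    · exact (connected_map_ofLE_iff _).mpr (h𝒯'.isTube hT')
  · refine Set.pairwise_insert.mpr
      ⟨?_, fun T _ _ => ⟨not_overlapping_top_left T, not_overlapping_top_right T⟩⟩
    rintro _ ⟨S', hS', rfl⟩ _ ⟨T', hT', rfl⟩ hne
    exact (overlapping_map_ofLE_iff _).not.mpr (h𝒯'.not_overlapping hS' hT' (hne <| congrArg _ ·))
  · obtain rfl | hXtop := eq_or_ne X ⊤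
    · exact Set.mem_insert _ _
    have hXT' : ∀ T' ∈ 𝒯', ¬ Overlapping X (T'.map (Hom.ofLE (G.deleteEdges_le {e}))) :=
      fun T' hT' => hXT _ (Set.mem_insert_of_mem _ ⟨T', hT', rfl⟩)
    obtain ⟨X', rfl⟩ :=
      mem_range_map_ofLE_deleteEdges (h𝒯'.notMem_edgeSet_of_forall_not_overlapping hG hXtop hXT')
    refine Set.mem_insert_of_mem _ ⟨X', h𝒯'.mem_of_forall_not_overlapping
      ((connected_map_ofLE_iff _).mp hX) fun T' hT' => ?_, rfl⟩
    exact (overlapping_map_ofLE_iff _).not.mp (hXT' T' hT')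

end

/-- for `G` connected with at least one edge, `𝒯` is a complete tubing of `G`
iff it is the disjoint union of `{G}` and a complete tubing of `G∖e` for a unique edge `e`,
namely the unique edge of `G` outside every proper tube of `𝒯`. -/
theorem completeTubing_iff_deleteEdge {V : Type*} [Fintype V] (G : SimpleGraph V)
    (hconn : G.Connected) (hedge : G.edgeSet.Nonempty) (𝒯 : Set G.Subgraph) :
    IsCompleteTubing G 𝒯 ↔
      ∃! e : Sym2 V, e ∈ G.edgeSet ∧
        ∃ 𝒯' : Set (G.deleteEdges {e}).Subgraph,
          IsCompleteTubing (G.deleteEdges {e}) 𝒯' ∧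
          (⊤ : G.Subgraph) ∉
            (SimpleGraph.Subgraph.map (SimpleGraph.Hom.ofLE (G.deleteEdges_le {e}))) '' 𝒯' ∧
          𝒯 = insert ⊤
            ((SimpleGraph.Subgraph.map (SimpleGraph.Hom.ofLE (G.deleteEdges_le {e}))) '' 𝒯') ∧
          ∀ T ∈ 𝒯, T ≠ ⊤ → e ∉ T.edgeSet := by
  constructor
  · intro h𝒯
    obtain ⟨e, he, hunc⟩ := h𝒯.exists_edge_forall_ne_top_notMem hconn hedge
    have hdel : G.deleteEdges {e} ≠ G := by simpa using he
    have h𝒯' := h𝒯.preimage_map_ofLE_deleteEdges hunc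
    refine ⟨e, ⟨he, _, h𝒯', fun ⟨T', _, hT'⟩ => map_ofLE_ne_top _ hdel T' hT',
      h𝒯.eq_insert_top_image_preimage hconn hunc, hunc⟩, ?_⟩
    rintro e' ⟨he', -, -, -, -, hunc'⟩
    by_contra hne
    obtain ⟨T', hT', he'T'⟩ := h𝒯'.exists_mem_edgeSet (e := e') (by simpa using ⟨he', hne⟩)
    exact hunc' _ hT' (map_ofLE_ne_top _ hdel T') (by simpa using he'T')
  · rintro ⟨e, ⟨-, 𝒯', h𝒯', -, rfl, -⟩, -⟩
    exact isCompleteTubing_insert_top_image hconn h𝒯'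

end Cosmo
end
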